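/- arXiv:2107.06644 — 5 statements merged into one kernel-verified Lean document; each statement's English description precedes it below -/
import Mathlib

section
/- For 0 ≤ k, k' ≤ ord(β−α), the Λ_E-modules M(k) and M(k') are isomorphic if and only if k = k'. -/
/-!
Write `v = (1, 1)`, `w = (0, t)` for the generators of `𝓜 t = ⟨v, w⟩` (the paper's `M(k)` is
`𝓜 (π ^ k)`) and `β - α = t * c`, so that `c ≠ 0`. Since `(S - α) v = c w`, an `S`-linear map
`f` out of `𝓜 t` satisfies `c f(w) = (S - α) f(v)`, i.e. `f(w) = (0, t b)` where `f(v) = (a, b)`. If `f` maps onto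
`𝓜 s`, writing `(1, 1)` in terms of `f(v), f(w)` shows that `a` and `b` are units; then writing
`(0, s)` in the same way gives `t ∣ s`, while `f(w) ∈ 𝓜 s` gives `s ∣ t b`, so `s ∣ t`.
Hence `t` and `s` are associated, and `π ^ k ~ π ^ k'` forces `k = k'`.
-/

open Submodule

theorem LinearMap.range_eq_span_pair {R M N : Type*} [Semiring R] [AddCommMonoid M] [Module R M]
    [AddCommMonoid N] [Module R N] {u v : M} (f : span R {u, v} →ₗ[R] N) :
    LinearMap.range f = span R {f ⟨u, subset_span (Set.mem_insert u _)⟩,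
      f ⟨v, subset_span (Set.mem_insert_of_mem u rfl)⟩} := by
  refine le_antisymm ?_ (span_le.2 ?_)
  · rintro _ ⟨x, rfl⟩
    obtain ⟨p, q, hx⟩ := mem_span_pair.1 x.2
    refine mem_span_pair.2 ⟨p, q, ?_⟩
    rw [← map_smul, ← map_smul, ← map_add]
    exact congrArg f (Subtype.ext hx)
  · rintro _ (rfl | rfl) <;> exact LinearMap.mem_range_self f _

section

variable {R : Type*} [CommRing R]

local notation "𝓜" t:max => Submodule.span R ({(1, 1), (0, t)} : Set (R × R))

theorem mem_span_one_one_zero_iff {t : R} {x : R × R} : x ∈ 𝓜 t ↔ t ∣ x.2 - x.1 := by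
  rw [mem_span_pair]
  constructor
  · rintro ⟨a, b, rfl⟩
    exact ⟨b, by simp [mul_comm]⟩
  · rintro ⟨c, hc⟩
    refine ⟨x.1, c, ?_⟩
    simp only [Prod.smul_mk, smul_eq_mul, mul_one, mul_zero, Prod.mk_add_mk, add_zero]
    exact Prod.ext rfl (by linear_combination -hc)

/-- The paper's `S`-linearity, for `S` acting on `R × R` as `diag(α, β)`. -/
def CommutesWithDiagonal (α β : R) {M : Submodule R (R × R)} (f : M →ₗ[R] R × R) : Prop :=
  ∀ x (hx : x ∈ M) (hSx : (α * x.1, β * x.2) ∈ M),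
    f ⟨(α * x.1, β * x.2), hSx⟩ = (α * (f ⟨x, hx⟩).1, β * (f ⟨x, hx⟩).2)

variable [IsDomain R]

theorem CommutesWithDiagonal.apply_zero_eq {α β t c : R} (hc : β - α = t * c) (hc0 : c ≠ 0)
    {f : 𝓜 t →ₗ[R] R × R} (hf : CommutesWithDiagonal α β f) :
    f ⟨(0, t), subset_span (Set.mem_insert_of_mem _ rfl)⟩ =
      (0, t * (f ⟨(1, 1), subset_span (Set.mem_insert _ _)⟩).2) := by
  set v : 𝓜 t := ⟨(1, 1), subset_span (Set.mem_insert _ _)⟩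
  set w : 𝓜 t := ⟨(0, t), subset_span (Set.mem_insert_of_mem _ rfl)⟩
  have hSv : (α * (1 : R), β * (1 : R)) ∈ 𝓜 t := mem_span_one_one_zero_iff.2 ⟨c, by simpa using hc⟩
  have hSv_eq : (⟨(α * 1, β * 1), hSv⟩ : 𝓜 t) = α • v + c • w := by
    simp only [v, w, SetLike.mk_smul_mk, AddMemClass.mk_add_mk, Prod.smul_mk, smul_eq_mul,
      Prod.mk_add_mk, mul_one, mul_zero, add_zero, Subtype.mk.injEq, Prod.mk.injEq, true_and]
    linear_combination hc
  have h : f (α • v + c • w) = (α * (f v).1, β * (f v).2) := by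
    rw [← hSv_eq]
    exact hf (1, 1) v.2 hSv
  rw [map_add, map_smul, map_smul] at h
  obtain ⟨h₁, h₂⟩ := Prod.ext_iff.1 h
  simp only [Prod.fst_add, Prod.snd_add, Prod.smul_fst, Prod.smul_snd, smul_eq_mul] at h₁ h₂
  exact Prod.ext (mul_left_cancel₀ hc0 (by linear_combination h₁))
    (mul_left_cancel₀ hc0 (by linear_combination h₂ + (f v).2 * hc))

theorem associated_of_range_eq_of_commutesWithDiagonal {α β t s : R} (hαβ : α ≠ β)
    (ht : t ∣ β - α) {f : 𝓜 t →ₗ[R] R × R} (hrange : LinearMap.range f = 𝓜 s)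
    (hf : CommutesWithDiagonal α β f) : Associated t s := by
  obtain ⟨c, hc⟩ := ht
  have hc0 : c ≠ 0 := by
    rintro rfl
    exact hαβ (by linear_combination -hc)
  have hspan := LinearMap.range_eq_span_pair f
  rw [hf.apply_zero_eq hc hc0, hrange] at hspan
  generalize f ⟨(1, 1), _⟩ = p at hspan
  obtain ⟨a, b⟩ := p
  have hv : ((1, 1) : R × R) ∈ 𝓜 s := subset_span (Set.mem_insert _ _)
  have hw : ((0, s) : R × R) ∈ 𝓜 s := subset_span (Set.mem_insert_of_mem _ rfl)
  have hfw : ((0, t * b) : R × R) ∈ 𝓜 s := by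
    rw [hspan]
    exact subset_span (Set.mem_insert_of_mem _ rfl)
  rw [hspan, mem_span_pair] at hv hw
  obtain ⟨x, y, hxy⟩ := hv
  obtain ⟨x', y', hxy'⟩ := hw
  simp only [Prod.smul_mk, smul_eq_mul, mul_zero, Prod.mk_add_mk, add_zero, Prod.mk.injEq]
    at hxy hxy'
  have hb : IsUnit b := IsUnit.of_mul_eq_one (x + y * t) (by linear_combination hxy.2)
  have hx' : x' = 0 := (mul_eq_zero.1 hxy'.1).resolve_right (right_ne_zero_of_mul_eq_one hxy.1)
  refine associated_of_dvd_dvd ⟨y' * b, by linear_combination -hxy'.2 + b * hx'⟩ ?_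
  exact hb.dvd_mul_right.1 (by simpa using mem_span_one_one_zero_iff.1 hfw)

end

theorem stmt3_general (O : Type*) [CommRing O] [IsDomain O]
    (π : O) (hπ : Irreducible π) (α β : O)
    (hαβ : α ≠ β) (k k' : ℕ) (hk : (π ^ k : O) ∣ β - α) :
    (∃ e : (Submodule.span O ({(1, 1), (0, π ^ k)} : Set (O × O))) ≃ₗ[O]
        (Submodule.span O ({(1, 1), (0, π ^ k')} : Set (O × O))),
      ∀ (x : O × O) (hx : x ∈ Submodule.span O ({(1, 1), (0, π ^ k)} : Set (O × O)))
        (hSx : (α * x.1, β * x.2) ∈ Submodule.span O ({(1, 1), (0, π ^ k)} : Set (O × O))),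
        ((e ⟨(α * x.1, β * x.2), hSx⟩ : O × O) =
          (α * (e ⟨x, hx⟩ : O × O).1, β * (e ⟨x, hx⟩ : O × O).2))) ↔
      k = k' := by
  constructor
  · rintro ⟨e, he⟩
    have hrange : LinearMap.range ((span O _).subtype ∘ₗ e.toLinearMap) =
        span O ({(1, 1), (0, π ^ k')} : Set (O × O)) := by
      rw [LinearMap.range_comp_of_range_eq_top _ e.range, range_subtype]
    have h := associated_of_range_eq_of_commutesWithDiagonal hαβ hk hrange he
    have hpow_dvd_pow {m n : ℕ} : π ^ m ∣ π ^ n ↔ m ≤ n := pow_dvd_pow_iff hπ.ne_zero hπ.not_isUnit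
    exact le_antisymm (hpow_dvd_pow.1 h.dvd) (hpow_dvd_pow.1 h.symm.dvd)
  · rintro rfl
    exact ⟨LinearEquiv.refl O _, fun _ _ _ => rfl⟩

/-- Sumida, uniqueness: for `0 ≤ k, k' ≤ ord(β−α)`, the modules
`M(k) = ⟨(1,1),(0,π^k)⟩_O` and `M(k')` (submodules of `O ⊕ O` with `S` acting by
`S·(a,b) = (αa, βb)`) are isomorphic as `Λ_E = O[[S]]`-modules — i.e. there is an
`O`-linear isomorphism commuting with the `S`-action — if and only if `k = k'`. -/
theorem stmt3 (O : Type*) [CommRing O] [IsDomain O] [IsDiscreteValuationRing O]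
    (π : O) (hπ : Irreducible π) (α β : O) (hα : π ∣ α) (hβ : π ∣ β)
    (hαβ : α ≠ β) (k k' : ℕ) (hk : (π ^ k : O) ∣ β - α) (hk' : (π ^ k' : O) ∣ β - α) :
    (∃ e : (Submodule.span O ({(1, 1), (0, π ^ k)} : Set (O × O))) ≃ₗ[O]
        (Submodule.span O ({(1, 1), (0, π ^ k')} : Set (O × O))),
      ∀ (x : O × O) (hx : x ∈ Submodule.span O ({(1, 1), (0, π ^ k)} : Set (O × O)))
        (hSx : (α * x.1, β * x.2) ∈ Submodule.span O ({(1, 1), (0, π ^ k)} : Set (O × O))),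
        ((e ⟨(α * x.1, β * x.2), hSx⟩ : O × O) =
          (α * (e ⟨x, hx⟩ : O × O).1, β * (e ⟨x, hx⟩ : O × O).2))) ↔
      k = k' :=
  stmt3_general O π hπ α β hαβ k k' hk
end

section
/- Let M be a finitely generated torsion Λ_E-module, free as an O-module, with char(M) = ((S−α)(S−β)) where α ≠ β ∈ πO. Then M is isomorphic as a Λ_E-module to M(k) for some integer k with 0 ≤ k ≤ ord(β−α). -/
/-!
The characteristic polynomial forces `M` to have rank 2. Since `O` is a PID, the
`β`-eigenline is saturated, so a primitive `β`-eigenvector extends to a basis in which `φ` is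
`!![α, 0; c, β]`. Replacing the first basis vector `v` by `u • v + t • w` (`u` a unit) changes
`c` to `u * c + t * (β - α)`; in a DVR this can be made `(β - α) / π ^ k`, and then
`v ↦ (1, 1)`, `w ↦ (0, π ^ k)` is the required isomorphism onto `M(k)`.
-/

open Polynomial Matrix

theorem IsBezout.exists_mul_eq_and_isCoprime {R : Type*} [CommRing R] [IsDomain R] [IsBezout R]
    {x y : R} (h : x ≠ 0 ∨ y ≠ 0) :
    ∃ d p q, d ≠ 0 ∧ IsCoprime p q ∧ x = d * p ∧ y = d * q := by
  obtain ⟨p, hp⟩ := IsBezout.gcd_dvd_left x y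
  obtain ⟨q, hq⟩ := IsBezout.gcd_dvd_right x y
  obtain ⟨a, b, hab⟩ := IsBezout.gcd_eq_sum x y
  have hd : IsBezout.gcd x y ≠ 0 := by
    rintro hd
    rw [hd] at hp hq
    simp_all
  refine ⟨_, p, q, hd, ⟨a, b, mul_left_cancel₀ hd ?_⟩, hp, hq⟩
  linear_combination hab - a * hp - b * hq

theorem IsDiscreteValuationRing.exists_isUnit_pow_mul_add_mul_eq {O : Type*} [CommRing O]
    [IsDomain O] [IsDiscreteValuationRing O] {π : O} (hπ : Irreducible π) {σ : O} (hσ : σ ≠ 0)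
    (c : O) : ∃ u t : O, ∃ k : ℕ, IsUnit u ∧ π ^ k * (u * c + t * σ) = σ := by
  rcases ValuationRing.dvd_total c σ with ⟨s, rfl⟩ | ⟨r, rfl⟩
  · obtain ⟨k, u, hs⟩ := eq_unit_mul_pow_irreducible (right_ne_zero_of_mul hσ) hπ
    exact ⟨u, 0, k, u.isUnit, by rw [hs]; ring⟩
  · exact ⟨1, 1 - r, 0, isUnit_one, by ring⟩

namespace Matrix

variable {R : Type*} [CommRing R] [IsDomain R] [IsBezout R]

theorem exists_isCoprime_mulVec_eq_smul (A : Matrix (Fin 2) (Fin 2) R) {β : R}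
    (hβ : A.charpoly.IsRoot β) : ∃ p q, IsCoprime p q ∧ A *ᵥ ![p, q] = β • ![p, q] := by
  obtain ⟨v, hv, hker⟩ := exists_mulVec_eq_zero_iff.mpr ((eval_charpoly A β).symm.trans hβ)
  have hv' : v 0 ≠ 0 ∨ v 1 ≠ 0 := by
    by_contra! h
    exact hv (by ext i; fin_cases i <;> simp [h])
  obtain ⟨d, p, q, hd, hpq, hp, hq⟩ := IsBezout.exists_mul_eq_and_isCoprime hv'
  have hvd : v = d • ![p, q] := by ext i; fin_cases i <;> simp [hp, hq]
  rw [hvd, mulVec_smul, smul_eq_zero_iff_right hd, sub_mulVec, sub_eq_zero] at hker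
  refine ⟨p, q, hpq, hker.symm.trans ?_⟩
  ext i; fin_cases i <;> simp [mulVec_diagonal]

theorem exists_isUnit_mul_eq_mul_lowerTriangular (A : Matrix (Fin 2) (Fin 2) R) {α β : R}
    (hA : A.charpoly = (X - C α) * (X - C β)) :
    ∃ P, IsUnit P ∧ ∃ c, A * P = P * !![α, 0; c, β] := by
  have hβ : A.charpoly.IsRoot β := by simp [hA]
  obtain ⟨p, q, ⟨x, y, hxy⟩, hpq⟩ := exists_isCoprime_mulVec_eq_smul A hβ
  have htr : A 0 0 + A 1 1 = α + β := by
    have h : X ^ 2 - C A.trace * X + C A.det = X ^ 2 - C (α + β) * X + C (α * β) := by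
      rw [← charpoly_fin_two, hA, C_add, C_mul]; ring
    have h1 := congrArg (coeff · 1) h
    simp only [coeff_add, coeff_sub, coeff_X_pow, coeff_C_mul_X, coeff_C, trace_fin_two,
      OfNat.one_ne_ofNat, one_ne_zero, if_true, if_false] at h1
    linear_combination -h1
  have h0 : A 0 0 * p + A 0 1 * q = β * p := by simpa using congrFun hpq 0
  have h1 : A 1 0 * p + A 1 1 * q = β * q := by simpa using congrFun hpq 1
  -- `c` is the `(p, q)`-coordinate of `A (y, -x)` in the basis `(y, -x), (p, q)`.
  refine ⟨!![y, p; -x, q], ?_, x * (A 0 0 * y - A 0 1 * x) + y * (A 1 0 * y - A 1 1 * x), ?_⟩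
  · rw [isUnit_iff_isUnit_det, det_fin_two_of, show y * q - p * -x = 1 by linear_combination hxy]
    exact isUnit_one
  · rw [eta_fin_two A, mul_fin_two, mul_fin_two]
    ext i j
    fin_cases i <;> fin_cases j <;> simp only [of_apply, cons_val', cons_val_zero, cons_val_one,
      cons_val_fin_one, empty_val', Fin.zero_eta, Fin.mk_one]
    · linear_combination (y * α - (A 0 0 * y - A 0 1 * x)) * hxy + (y * y * q + x * y * p) * htr
        - y * y * h1 - x * y * h0
    · linear_combination h0
    · linear_combination (-(x * α) - (A 1 0 * y - A 1 1 * x)) * hxy - (x * y * q + x * x * p) * htr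
        + x * y * h1 + x * x * h0
    · linear_combination h1

theorem exists_isUnit_mul_eq_mul_of_charpoly_eq {O : Type*} [CommRing O] [IsDomain O]
    [IsDiscreteValuationRing O] {π : O} (hπ : Irreducible π) (A : Matrix (Fin 2) (Fin 2) O)
    {α β : O} (hαβ : α ≠ β) (hA : A.charpoly = (X - C α) * (X - C β)) :
    ∃ (k : ℕ) (c : O) (P : Matrix (Fin 2) (Fin 2) O),
      π ^ k * c = β - α ∧ IsUnit P ∧ A * P = P * !![α, 0; c, β] := by
  obtain ⟨P, hP, c, hAP⟩ := exists_isUnit_mul_eq_mul_lowerTriangular A hA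
  obtain ⟨u, t, k, hu, hk⟩ :=
    IsDiscreteValuationRing.exists_isUnit_pow_mul_add_mul_eq hπ (sub_ne_zero.mpr hαβ.symm) c
  have hT : IsUnit !![u, 0; t, 1] := by simpa [isUnit_iff_isUnit_det] using hu
  refine ⟨k, _, P * !![u, 0; t, 1], hk, hP.mul hT, ?_⟩
  rw [← mul_assoc, hAP, mul_assoc, mul_assoc, mul_fin_two, mul_fin_two]
  ring_nf

end Matrix

theorem Module.Basis.exists_linearEquiv_mulVec {R M n : Type*} [CommRing R] [AddCommGroup M]
    [Module R M] [Fintype n] [DecidableEq n] (b : Module.Basis n R M) (φ : M →ₗ[R] M)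
    {P B : Matrix n n R} (hP : IsUnit P) (h : LinearMap.toMatrix b b φ * P = P * B) :
    ∃ e : M ≃ₗ[R] (n → R), ∀ x, e (φ x) = B *ᵥ e x := by
  let := hP.invertible
  have hcomm : ⅟P * LinearMap.toMatrix b b φ = B * ⅟P := by
    calc ⅟P * LinearMap.toMatrix b b φ = ⅟P * (LinearMap.toMatrix b b φ * P) * ⅟P := by
          simp [Matrix.mul_assoc]
      _ = B * ⅟P := by rw [h]; simp [← Matrix.mul_assoc]
  refine ⟨b.equivFun.trans (P.toLinearEquiv' this).symm, fun x => ?_⟩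
  change ⅟P *ᵥ b.repr (φ x) = B *ᵥ (⅟P *ᵥ b.repr x)
  rw [← LinearMap.toMatrix_mulVec_repr b b, mulVec_mulVec, hcomm, ← mulVec_mulVec]

theorem exists_linearEquiv_span_pair {R : Type*} [CommRing R] [IsDomain R] {α β c d : R}
    (hd : d ≠ 0) (hcd : d * c = β - α) :
    ∃ e : (Fin 2 → R) ≃ₗ[R] Submodule.span R ({(1, 1), (0, d)} : Set (R × R)),
      ∀ y, (e (!![α, 0; c, β] *ᵥ y) : R × R) = (α * (e y : R × R).1, β * (e y : R × R).2) := by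
  have hli : LinearIndependent R ![((1 : R), (1 : R)), (0, d)] :=
    LinearIndependent.pair_iff.mpr fun s t hst => by
      obtain ⟨rfl, ht⟩ : s = 0 ∧ s + t * d = 0 := by simpa [Prod.ext_iff] using hst
      simpa [hd] using ht
  have hrange : LinearMap.range (Fintype.linearCombination R ![((1 : R), (1 : R)), (0, d)]) =
      Submodule.span R {(1, 1), (0, d)} := by
    rw [Fintype.range_linearCombination, range_cons_cons_empty]
  refine ⟨(LinearEquiv.ofInjective _ hli.fintypeLinearCombination_injective).trans
    (LinearEquiv.ofEq _ _ hrange), fun y => ?_⟩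
  have hsnd : α * y 0 + (c * y 0 + β * y 1) * d = β * (y 0 + y 1 * d) := by
    linear_combination y 0 * hcd
  refine Prod.ext ?_ ?_
  · simp [Fintype.linearCombination_apply, vecHead]
  · simpa [Fintype.linearCombination_apply, vecHead, vecTail] using hsnd

theorem stmt4_general (O : Type*) [CommRing O] [IsDomain O] [IsDiscreteValuationRing O]
    (π : O) (hπ : Irreducible π) (α β : O) (hαβ : α ≠ β)
    (M : Type*) [AddCommGroup M] [Module O M] [Module.Free O M] [Module.Finite O M]
    (φ : M →ₗ[O] M)
    (hchar : LinearMap.charpoly φ =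
      (Polynomial.X - Polynomial.C α) * (Polynomial.X - Polynomial.C β)) :
    ∃ k : ℕ, (π ^ k : O) ∣ β - α ∧
      ∃ e : M ≃ₗ[O] (Submodule.span O ({(1, 1), (0, π ^ k)} : Set (O × O))),
        ∀ x : M, ((e (φ x) : O × O) = (α * (e x : O × O).1, β * (e x : O × O).2)) := by
  have hrank : Module.finrank O M = 2 := by
    rw [← LinearMap.charpoly_natDegree, hchar]
    compute_degree!
  let b := Module.finBasisOfFinrankEq O M hrank
  obtain ⟨k, c, P, hkc, hP, hAP⟩ := Matrix.exists_isUnit_mul_eq_mul_of_charpoly_eq hπ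
    (LinearMap.toMatrix b b φ) hαβ (by rw [LinearMap.charpoly_toMatrix, hchar])
  obtain ⟨e₁, he₁⟩ := b.exists_linearEquiv_mulVec φ hP hAP
  obtain ⟨e₂, he₂⟩ := exists_linearEquiv_span_pair (pow_ne_zero k hπ.ne_zero) hkc
  refine ⟨k, ⟨c, hkc.symm⟩, e₁.trans e₂, fun x => ?_⟩
  rw [LinearEquiv.trans_apply, LinearEquiv.trans_apply, he₁, he₂]

/-- Sumida, existence: let `M` be a finitely generated torsion
`Λ_E`-module, free as an `O`-module, with `char(M) = ((S−α)(S−β))`, `α ≠ β ∈ πO`.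
The `Λ_E`-structure is encoded by the `O`-linear action `φ` of `S`; since `M` is
`O`-free of finite rank, the characteristic ideal is generated by the
characteristic polynomial of `φ`.  Then `M` is isomorphic as a `Λ_E`-module
(i.e. by an `O`-linear isomorphism commuting with the `S`-actions) to
`M(k) = ⟨(1,1),(0,π^k)⟩_O ⊂ O[[S]]/(S−α) ⊕ O[[S]]/(S−β)` for some
`0 ≤ k ≤ ord(β−α)`. -/
theorem stmt4 (O : Type*) [CommRing O] [IsDomain O] [IsDiscreteValuationRing O]
    (π : O) (hπ : Irreducible π) (α β : O) (hα : π ∣ α) (hβ : π ∣ β) (hαβ : α ≠ β)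
    (M : Type*) [AddCommGroup M] [Module O M] [Module.Free O M] [Module.Finite O M]
    (φ : M →ₗ[O] M)
    (hchar : LinearMap.charpoly φ =
      (Polynomial.X - Polynomial.C α) * (Polynomial.X - Polynomial.C β)) :
    ∃ k : ℕ, (π ^ k : O) ∣ β - α ∧
      ∃ e : M ≃ₗ[O] (Submodule.span O ({(1, 1), (0, π ^ k)} : Set (O × O))),
        ∀ x : M, ((e (φ x) : O × O) = (α * (e x : O × O).1, β * (e x : O × O).2)) :=
  stmt4_general O π hπ α β hαβ M φ hchar
end

section
/- Let M be a finitely generated torsion O[[S]]-module with no nontrivial finite submodule and char(M) = ((S−α)(S−β)) with α ≠ β ∈ πO, and suppose M ≅ M(k). Then M(k)/S·M(k) ≅ O/αO ⊕ O/βO if ord(β−α) − k ≥ min(ord α, ord β), and M(k)/S·M(k) ≅ O/((β−α)π^{−k})O ⊕ O/(αβ·π^{k}/(β−α))O if ord(β−α) − k < min(ord α, ord β). -/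
/-!
In the basis `(1, 1), (0, π ^ k)` of `M(k)` the operator `S` has matrix `[[α, 0], [c, β]]`, since
`S (1, 1) = α (1, 1) + c (0, π ^ k)`; hence `M(k) / S M(k) ≅ O² / ⟨(α, c), (0, β)⟩`. If
`ord c ≥ min (ord α) (ord β)` then `c ∈ (α, β)` and a column operation diagonalises the matrix to
`diag(α, β)`. Otherwise `c` divides both `α` and `β`, and the Smith normal form is
`diag(c, αβ / c)`.
-/

open Submodule

theorem IsDiscreteValuationRing.emultiplicity_le_emultiplicity_iff_dvd {O : Type*} [CommRing O]
    [IsDomain O] [IsDiscreteValuationRing O] {π : O} (hπ : Irreducible π) {a b : O} :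
    emultiplicity π a ≤ emultiplicity π b ↔ a ∣ b := by
  have h : ∀ x : O, addVal O x = emultiplicity π x := fun x => by
    rw [addVal, multiplicity_addValuation_apply, emultiplicity_eq_of_associated_left
      (associated_of_irreducible O hπ (Classical.choose_spec (exists_prime O)).irreducible)]
  rw [← h, ← h, addVal_le_iff_dvd]

theorem LinearMap.range_coprod_toSpanSingleton {R M : Type*} [Semiring R] [AddCommMonoid M]
    [Module R M] (x y : M) :
    range ((toSpanSingleton R M x).coprod (toSpanSingleton R M y)) = span R {x, y} := by
  rw [range_coprod, ← span_singleton_eq_range, ← span_singleton_eq_range, span_insert]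

noncomputable def LinearMap.quotientComapSubtypeEquiv {R M N : Type*} [Ring R] [AddCommGroup M]
    [Module R M] [AddCommGroup N] [Module R N] (f : M →ₗ[R] N) (hf : Function.Injective f)
    {p : Submodule R N} (hp : range f = p) (P : Submodule R M) :
    (p ⧸ (P.map f).comap p.subtype) ≃ₗ[R] M ⧸ P := by
  subst hp
  refine (Quotient.equiv P _ (LinearEquiv.ofInjective f hf) ?_).symm
  refine map_injective_of_injective (range f).injective_subtype ?_
  rw [map_comap_subtype, inf_eq_right.2 (map_le_range (f := f)), ← map_comp]
  rfl

section QuotientSpanPair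

variable {R : Type*} [CommRing R]

noncomputable def quotientSpanPairEquiv {r s t : R} (u v : R) (hs : s = r * u + t * v) :
    ((R × R) ⧸ span R {(r, s), (0, t)}) ≃ₗ[R] (R ⧸ Ideal.span {r}) × (R ⧸ Ideal.span {t}) :=
  let F : R × R →ₗ[R] (R ⧸ Ideal.span {r}) × (R ⧸ Ideal.span {t}) :=
    ((Ideal.span {r}).mkQ ∘ₗ LinearMap.fst R R R).prod
      ((Ideal.span {t}).mkQ ∘ₗ (LinearMap.snd R R R - u • LinearMap.fst R R R))
  have hsurj : Function.Surjective F := by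
    rintro ⟨⟨x⟩, ⟨y⟩⟩
    refine ⟨(x, y + u * x), ?_⟩
    change (Submodule.Quotient.mk x, Submodule.Quotient.mk (y + u * x - u * x)) = _
    rw [add_sub_cancel_right]
    rfl
  have hker : LinearMap.ker F = span R {(r, s), (0, t)} := by
    ext ⟨x, y⟩
    have hF : F (x, y) = 0 ↔ r ∣ x ∧ t ∣ y - u * x := by
      change (Submodule.Quotient.mk x, Submodule.Quotient.mk (y - u * x)) = (0 : _ × _) ↔ _
      simp only [Prod.mk_eq_zero, Quotient.mk_eq_zero, Ideal.mem_span_singleton]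
    rw [LinearMap.mem_ker, hF, mem_span_pair]
    simp only [Prod.smul_mk, smul_eq_mul, mul_zero, Prod.mk_add_mk, add_zero, Prod.mk.injEq]
    constructor
    · rintro ⟨⟨a, rfl⟩, b, hb⟩
      exact ⟨a, b - a * v, by ring, by linear_combination hs * a - hb⟩
    · rintro ⟨a, b, rfl, rfl⟩
      exact ⟨dvd_mul_left r a, b + a * v, by linear_combination a * hs⟩
  (quotEquivOfEq _ _ hker.symm).trans (F.quotKerEquivOfSurjective hsurj)

noncomputable def quotientSpanPairSwapEquiv (r u w : R) :
    ((R × R) ⧸ span R {(r * u, r), (0, r * w)}) ≃ₗ[R]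
      (R ⧸ Ideal.span {r}) × (R ⧸ Ideal.span {u * (r * w)}) :=
  let F : R × R →ₗ[R] (R ⧸ Ideal.span {r}) × (R ⧸ Ideal.span {u * (r * w)}) :=
    ((Ideal.span {r}).mkQ ∘ₗ LinearMap.snd R R R).prod
      ((Ideal.span {u * (r * w)}).mkQ ∘ₗ (LinearMap.fst R R R - u • LinearMap.snd R R R))
  have hsurj : Function.Surjective F := by
    rintro ⟨⟨y⟩, ⟨x⟩⟩
    refine ⟨(x + u * y, y), ?_⟩
    change (Submodule.Quotient.mk y, Submodule.Quotient.mk (x + u * y - u * y)) = _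
    rw [add_sub_cancel_right]
    rfl
  have hker : LinearMap.ker F = span R {(r * u, r), (0, r * w)} := by
    ext ⟨x, y⟩
    have hF : F (x, y) = 0 ↔ r ∣ y ∧ u * (r * w) ∣ x - u * y := by
      change (Submodule.Quotient.mk y, Submodule.Quotient.mk (x - u * y)) = (0 : _ × _) ↔ _
      simp only [Prod.mk_eq_zero, Quotient.mk_eq_zero, Ideal.mem_span_singleton]
    rw [LinearMap.mem_ker, hF, mem_span_pair]
    simp only [Prod.smul_mk, smul_eq_mul, mul_zero, Prod.mk_add_mk, Prod.mk.injEq]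
    constructor
    · rintro ⟨⟨a, rfl⟩, b, hb⟩
      exact ⟨a + w * b, -b, by linear_combination -hb, by ring⟩
    · rintro ⟨a, b, rfl, rfl⟩
      exact ⟨⟨a + b * w, by ring⟩, -b, by ring⟩
  (quotEquivOfEq _ _ hker.symm).trans (F.quotKerEquivOfSurjective hsurj)

end QuotientSpanPair

section Coinvariants

variable {O : Type*} [CommRing O]

abbrev diagonalEnd (α β : O) : O × O →ₗ[O] O × O :=
  (LinearMap.lsmul O O α).prodMap (LinearMap.lsmul O O β)

abbrev Submodule.Coinvariants {M : Type*} [AddCommGroup M] [Module O M]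
    (p : Submodule O M) (S : M →ₗ[O] M) : Type _ :=
  p ⧸ (p.map S).comap p.subtype

noncomputable def coinvariantsEquiv [IsDomain O] {q α β c : O} (hq : q ≠ 0)
    (hc : c * q = β - α) :
    (span O {(1, 1), (0, q)}).Coinvariants (diagonalEnd α β) ≃ₗ[O]
      (O × O) ⧸ span O {(α, c), (0, β)} :=
  let ψ := (LinearMap.toSpanSingleton O (O × O) (1, 1)).coprod
    (LinearMap.toSpanSingleton O (O × O) (0, q))
  have hψ : ∀ a b : O, ψ (a, b) = (a, a + b * q) := fun a b => by simp [ψ]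
  have hinj : Function.Injective ψ := by
    rintro ⟨a, b⟩ ⟨a', b'⟩ h
    simp only [hψ, Prod.mk.injEq] at h
    obtain ⟨rfl, h⟩ := h
    exact Prod.ext rfl (mul_right_cancel₀ hq (add_left_cancel h))
  have himage : (span O {(1, 1), (0, q)}).map (diagonalEnd α β) =
      (span O {(α, c), (0, β)}).map ψ := by
    have h₁ : diagonalEnd α β (1, 1) = ψ (α, c) := by
      rw [hψ, hc]; simp
    have h₂ : diagonalEnd α β (0, q) = ψ (0, β) := by
      rw [hψ]; simp
    simp only [map_span, Set.image_insert_eq, Set.image_singleton, h₁, h₂]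
  (quotEquivOfEq _ _ (congrArg _ himage)).trans
    (ψ.quotientComapSubtypeEquiv hinj (LinearMap.range_coprod_toSpanSingleton _ _) _)

end Coinvariants

theorem stmt13_general (O : Type*) [CommRing O] [IsDomain O] [IsDiscreteValuationRing O]
    (π : O) (hπ : Irreducible π) (α β : O)
    (k : ℕ) (c : O) (hc : c * π ^ k = β - α) :
    (min (emultiplicity π α) (emultiplicity π β) ≤
        emultiplicity π (β - α) - (k : ℕ∞) →
      Nonempty
        (((Submodule.span O ({(1, 1), (0, π ^ k)} : Set (O × O))) ⧸
            (Submodule.comap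
              (Submodule.span O ({(1, 1), (0, π ^ k)} : Set (O × O))).subtype
              (Submodule.map
                (((LinearMap.lsmul O O) α).prodMap ((LinearMap.lsmul O O) β))
                (Submodule.span O ({(1, 1), (0, π ^ k)} : Set (O × O)))))) ≃ₗ[O]
          (O ⧸ (Ideal.span {α} : Ideal O)) × (O ⧸ (Ideal.span {β} : Ideal O)))) ∧
    (emultiplicity π (β - α) - (k : ℕ∞) <
        min (emultiplicity π α) (emultiplicity π β) →
      ∀ d : O, d * c = α * β →
      Nonempty
        (((Submodule.span O ({(1, 1), (0, π ^ k)} : Set (O × O))) ⧸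
            (Submodule.comap
              (Submodule.span O ({(1, 1), (0, π ^ k)} : Set (O × O))).subtype
              (Submodule.map
                (((LinearMap.lsmul O O) α).prodMap ((LinearMap.lsmul O O) β))
                (Submodule.span O ({(1, 1), (0, π ^ k)} : Set (O × O)))))) ≃ₗ[O]
          (O ⧸ (Ideal.span {c} : Ideal O)) × (O ⧸ (Ideal.span {d} : Ideal O)))) := by
  have hprime : Prime π := hπ.prime
  have hord : emultiplicity π (β - α) - k = emultiplicity π c := by
    rw [← hc, emultiplicity_mul hprime, emultiplicity_pow_self_of_prime hprime]
    exact (ENat.addLECancellable_of_ne_top (WithTop.coe_ne_top)).add_tsub_cancel_right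
  have E := coinvariantsEquiv (pow_ne_zero k hπ.ne_zero) hc
  have hdvd : ∀ {a b : O}, emultiplicity π a ≤ emultiplicity π b → a ∣ b :=
    (IsDiscreteValuationRing.emultiplicity_le_emultiplicity_iff_dvd hπ).1
  rw [hord]
  refine ⟨fun hmin => ?_, fun hlt d hd => ?_⟩
  · obtain ⟨u, v, huv⟩ : ∃ u v, c = α * u + β * v := by
      rcases min_le_iff.1 hmin with h | h
      · obtain ⟨u, hu⟩ := hdvd h
        exact ⟨u, 0, by rw [hu]; ring⟩
      · obtain ⟨v, hv⟩ := hdvd h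
        exact ⟨0, v, by rw [hv]; ring⟩
    exact ⟨E.trans (quotientSpanPairEquiv u v huv)⟩
  · have hc0 : c ≠ 0 := by
      rintro rfl
      simp at hlt
    obtain ⟨u, rfl⟩ := hdvd (hlt.le.trans (min_le_left _ _))
    obtain ⟨w, rfl⟩ := hdvd (hlt.le.trans (min_le_right _ _))
    obtain rfl : d = u * (c * w) := mul_right_cancel₀ hc0 (by rw [hd]; ring)
    exact ⟨E.trans (quotientSpanPairSwapEquiv c u w)⟩

/-- coinvariants of `M(k)`, cf. [MOMO, Lemma 5.2]: let `O` be a DVR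
with uniformizer `π` and valuation `ord = emultiplicity π`, `α ≠ β ∈ πO`,
`0 ≤ k ≤ ord(β−α)` and `c = (β−α)π^{−k}` (so `c·π^k = β−α`).  Let
`M(k) = ⟨(1,1),(0,π^k)⟩_O ⊂ O ⊕ O` with `S·(a,b) = (αa, βb)`.  Then, as
`O`-modules,
`M(k)/S·M(k) ≅ O/αO ⊕ O/βO` if `ord(β−α) − k ≥ min(ord α, ord β)`, and
`M(k)/S·M(k) ≅ O/((β−α)π^{−k})O ⊕ O/(αβπ^k/(β−α))O` (where
`d·(β−α)π^{−k} = αβ`) if `ord(β−α) − k < min(ord α, ord β)`. -/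
theorem stmt13 (O : Type*) [CommRing O] [IsDomain O] [IsDiscreteValuationRing O]
    (π : O) (hπ : Irreducible π) (α β : O) (hα : π ∣ α) (hβ : π ∣ β) (hαβ : α ≠ β)
    (k : ℕ) (c : O) (hc : c * π ^ k = β - α) :
    (min (emultiplicity π α) (emultiplicity π β) ≤
        emultiplicity π (β - α) - (k : ℕ∞) →
      Nonempty
        (((Submodule.span O ({(1, 1), (0, π ^ k)} : Set (O × O))) ⧸
            (Submodule.comap
              (Submodule.span O ({(1, 1), (0, π ^ k)} : Set (O × O))).subtype
              (Submodule.map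
                (((LinearMap.lsmul O O) α).prodMap ((LinearMap.lsmul O O) β))
                (Submodule.span O ({(1, 1), (0, π ^ k)} : Set (O × O)))))) ≃ₗ[O]
          (O ⧸ (Ideal.span {α} : Ideal O)) × (O ⧸ (Ideal.span {β} : Ideal O)))) ∧
    (emultiplicity π (β - α) - (k : ℕ∞) <
        min (emultiplicity π α) (emultiplicity π β) →
      ∀ d : O, d * c = α * β →
      Nonempty
        (((Submodule.span O ({(1, 1), (0, π ^ k)} : Set (O × O))) ⧸
            (Submodule.comap
              (Submodule.span O ({(1, 1), (0, π ^ k)} : Set (O × O))).subtype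
              (Submodule.map
                (((LinearMap.lsmul O O) α).prodMap ((LinearMap.lsmul O O) β))
                (Submodule.span O ({(1, 1), (0, π ^ k)} : Set (O × O)))))) ≃ₗ[O]
          (O ⧸ (Ideal.span {c} : Ideal O)) × (O ⧸ (Ideal.span {d} : Ideal O)))) :=
  stmt13_general O π hπ α β k c hc
end

section
/- With M(k) as above and A_K ⊗ O ≅ M(k)/S·M(k): if ord(α) = ord(β) and M(k)/S M(k) ≅ O/π^{N_1} ⊕ O/π^{N_2} with N_1 < N_2, then k > 0 and ord(β−α) − k < min(ord α, ord β). -/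
/-!
Parametrize `M(k)` by `O × O` via `(x, y) ↦ (x, x + y π^k)`. If `β π^k ∣ β - α`, which is what
the negation of the conclusion gives, then `S • M(k)` corresponds to `αO × βO`, so
`M(k) / S M(k) ≅ O/α ⊕ O/β ≅ O/π^m ⊕ O/π^m`. This module has annihilator `(π^m)` and length `2m`,
while `O/π^{N₁} ⊕ O/π^{N₂}` has annihilator `(π^{N₂})` and length `N₁ + N₂`; hence `N₁ = N₂ = m`.
-/

open IsDiscreteValuationRing

section Lattice

variable {R : Type*} [CommRing R]

/-- The lattice `M(k)` of the paper, for `t = π ^ k`. -/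
def latticeM (t : R) : Submodule R (R × R) :=
  Submodule.span R {(1, 1), (0, t)}

def diagSMul (a b : R) : (R × R) →ₗ[R] R × R :=
  (LinearMap.lsmul R R a).prodMap (LinearMap.lsmul R R b)

def diagImage (a b : R) (M : Submodule R (R × R)) : Submodule R M :=
  (M.map (diagSMul a b)).comap M.subtype

def latticeMParam (t : R) : (R × R) →ₗ[R] R × R :=
  (LinearMap.fst R R R).prod (LinearMap.fst R R R + (LinearMap.snd R R R).smulRight t)

@[simp]
theorem latticeMParam_apply (t : R) (p : R × R) : latticeMParam t p = (p.1, p.1 + p.2 * t) :=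
  rfl

theorem range_latticeMParam (t : R) : LinearMap.range (latticeMParam t) = latticeM t := by
  ext v
  simp [latticeM, Submodule.mem_span_pair, eq_comm]

theorem latticeMParam_injective {t : R} (ht : t ∈ nonZeroDivisors R) :
    Function.Injective (latticeMParam t) := by
  rintro ⟨x, y⟩ ⟨x', y'⟩ h
  simp only [latticeMParam_apply, Prod.mk.injEq] at h
  obtain ⟨rfl, h⟩ := h
  simpa [mul_comm _ t, mul_cancel_left_mem_nonZeroDivisors ht] using h

noncomputable def latticeMEquiv {t : R} (ht : t ∈ nonZeroDivisors R) :
    (R × R) ≃ₗ[R] latticeM t :=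
  (LinearEquiv.ofInjective _ (latticeMParam_injective ht)).trans
    (LinearEquiv.ofEq _ _ (range_latticeMParam t))

@[simp]
theorem coe_latticeMEquiv {t : R} (ht : t ∈ nonZeroDivisors R) (p : R × R) :
    (latticeMEquiv ht p : R × R) = latticeMParam t p :=
  rfl

theorem map_diagSMul_latticeM (a b t : R) :
    (latticeM t).map (diagSMul a b) = Submodule.span R {(a, b), (0, b * t)} := by
  simp [latticeM, Submodule.map_span, Set.image_pair, diagSMul]

theorem latticeMParam_mem_map_diagSMul_iff {a b t : R} (ht : t ∈ nonZeroDivisors R)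
    (hab : b * t ∣ b - a) (x y : R) :
    latticeMParam t (x, y) ∈ (latticeM t).map (diagSMul a b) ↔ a ∣ x ∧ b ∣ y := by
  simp only [map_diagSMul_latticeM, Submodule.mem_span_pair, latticeMParam_apply, Prod.smul_mk,
    smul_eq_mul, mul_zero, Prod.mk_add_mk, add_zero, Prod.mk.injEq]
  obtain ⟨c, hc⟩ := hab
  rw [mul_comm] at hc
  constructor
  · rintro ⟨r, s, rfl, hy⟩
    refine ⟨dvd_mul_left a r, r * c + s, ?_⟩
    rw [← mul_cancel_left_mem_nonZeroDivisors ht]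
    linear_combination -hy + r * hc
  · rintro ⟨⟨r, rfl⟩, ⟨s, rfl⟩⟩
    exact ⟨r, s - r * c, by ring, by linear_combination r * hc⟩

noncomputable def latticeMQuotientMap {t : R} (ht : t ∈ nonZeroDivisors R) (a b : R) :
    latticeM t →ₗ[R] (R ⧸ Ideal.span {a}) × (R ⧸ Ideal.span {b}) :=
  ((Ideal.span {a}).mkQ.prodMap (Ideal.span {b}).mkQ) ∘ₗ (latticeMEquiv ht).symm.toLinearMap

theorem latticeMQuotientMap_surjective {t : R} (ht : t ∈ nonZeroDivisors R) (a b : R) :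
    Function.Surjective (latticeMQuotientMap ht a b) :=
  (Function.Surjective.prodMap (Submodule.mkQ_surjective _) (Submodule.mkQ_surjective _)).comp
    (latticeMEquiv ht).symm.surjective

theorem ker_latticeMQuotientMap {a b t : R} (ht : t ∈ nonZeroDivisors R)
    (hab : b * t ∣ b - a) :
    LinearMap.ker (latticeMQuotientMap ht a b) = diagImage a b (latticeM t) := by
  ext m
  obtain ⟨⟨x, y⟩, rfl⟩ := (latticeMEquiv ht).surjective m
  simp [latticeMQuotientMap, diagImage, Ideal.Quotient.eq_zero_iff_dvd,
    ← latticeMParam_mem_map_diagSMul_iff ht hab]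

noncomputable def latticeMQuotientEquiv {a b t : R} (ht : t ∈ nonZeroDivisors R)
    (hab : b * t ∣ b - a) :
    (latticeM t ⧸ diagImage a b (latticeM t)) ≃ₗ[R]
      (R ⧸ Ideal.span {a}) × (R ⧸ Ideal.span {b}) :=
  (Submodule.quotEquivOfEq _ _ (ker_latticeMQuotientMap ht hab).symm).trans
    ((latticeMQuotientMap ht a b).quotKerEquivOfSurjective
      (latticeMQuotientMap_surjective ht a b))

end Lattice

section DVR

variable {O : Type*} [CommRing O] [IsDomain O] [IsDiscreteValuationRing O] {π : O}

theorem emultiplicity_eq_addVal (hπ : Irreducible π) (x : O) :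
    emultiplicity π x = addVal O x := by
  rw [addVal, multiplicity_addValuation_apply, emultiplicity_eq_of_associated_left
    (associated_of_irreducible O hπ (Classical.choose_spec (exists_prime O)).irreducible)]

theorem length_quotient_span_pow (hπ : Irreducible π) (n : ℕ) :
    Module.length O (O ⧸ Ideal.span {π ^ n}) = n := by
  rw [← Ring.ord, Ring.ord_eq_addVal, hπ.addVal_pow]

theorem not_nonempty_prod_quotient_span_equiv (hπ : Irreducible π) (x : O) {N₁ N₂ : ℕ}
    (hN : N₁ < N₂) :
    ¬ Nonempty (((O ⧸ Ideal.span {x}) × (O ⧸ Ideal.span {x})) ≃ₗ[O]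
      (O ⧸ Ideal.span {π ^ N₁}) × (O ⧸ Ideal.span {π ^ N₂})) := by
  rintro ⟨e⟩
  have hann : Ideal.span {x} = Ideal.span {π ^ N₂} := by
    have hle : Ideal.span {π ^ N₂} ≤ Ideal.span {π ^ N₁} :=
      Ideal.span_singleton_le_span_singleton.mpr (pow_dvd_pow π hN.le)
    simpa [Module.annihilator_prod, Ideal.annihilator_quotient, inf_eq_right.mpr hle]
      using e.annihilator_eq
  have hlen := e.length_eq
  rw [Module.length_prod, Module.length_prod, hann, length_quotient_span_pow hπ,
    length_quotient_span_pow hπ] at hlen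
  norm_cast at hlen
  omega

end DVR

theorem stmt14_general (O : Type*) [CommRing O] [IsDomain O] [IsDiscreteValuationRing O]
    (π : O) (hπ : Irreducible π) (α β : O)
    (k : ℕ) (hk : (π ^ k : O) ∣ β - α)
    (hm : emultiplicity π α = emultiplicity π β)
    (N₁ N₂ : ℕ) (hN : N₁ < N₂)
    (hquot : Nonempty
      (((Submodule.span O ({(1, 1), (0, π ^ k)} : Set (O × O))) ⧸
          (Submodule.comap
            (Submodule.span O ({(1, 1), (0, π ^ k)} : Set (O × O))).subtype
            (Submodule.map
              (((LinearMap.lsmul O O) α).prodMap ((LinearMap.lsmul O O) β))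
              (Submodule.span O ({(1, 1), (0, π ^ k)} : Set (O × O)))))) ≃ₗ[O]
        (O ⧸ (Ideal.span {π ^ N₁} : Ideal O)) × (O ⧸ (Ideal.span {π ^ N₂} : Ideal O)))) :
    0 < k ∧
      emultiplicity π (β - α) - (k : ℕ∞) <
        min (emultiplicity π α) (emultiplicity π β) := by
  simp only [emultiplicity_eq_addVal hπ] at hm ⊢
  rw [hm, min_self]
  by_contra hcon
  have hassoc : Associated α β := (addVal_eq_iff_associated α β).mp hm
  have hk' : (k : ℕ∞) ≤ addVal O (β - α) := hπ.addVal_pow k ▸ addVal_le_iff_dvd.mpr hk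
  have hdvd : β * π ^ k ∣ β - α := by
    rw [← addVal_le_iff_dvd, addVal_mul, hπ.addVal_pow]
    rw [not_and_or, not_lt, not_lt, nonpos_iff_eq_zero] at hcon
    rcases hcon with rfl | hle
    · simpa [addVal_le_iff_dvd] using dvd_sub dvd_rfl hassoc.symm.dvd
    · exact ((ENat.addLECancellable_natCast k).le_tsub_iff_right hk').mp hle
  have hπk : π ^ k ∈ nonZeroDivisors O :=
    mem_nonZeroDivisors_of_ne_zero (pow_ne_zero k hπ.ne_zero)
  have hspan : Ideal.span {α} = Ideal.span {β} :=
    Ideal.span_singleton_eq_span_singleton.mpr hassoc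
  obtain ⟨e⟩ := hquot
  exact not_nonempty_prod_quotient_span_equiv hπ β hN
    ⟨((latticeMQuotientEquiv hπk hdvd).trans
      ((Submodule.quotEquivOfEq _ _ hspan).prodCongr (LinearEquiv.refl _ _))).symm.trans e⟩

/-- argument of Proposition 4.7: let `O` be a DVR with uniformizer
`π`, `α ≠ β ∈ πO`, `0 ≤ k ≤ ord(β−α)`, and `M(k) = ⟨(1,1),(0,π^k)⟩_O ⊂ O ⊕ O`
with `S·(a,b) = (αa, βb)`.  If `ord α = ord β` and
`M(k)/S·M(k) ≅ O/π^{N₁} ⊕ O/π^{N₂}` with `N₁ < N₂`, then `k > 0` and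
`ord(β−α) − k < min(ord α, ord β)`. -/
theorem stmt14 (O : Type*) [CommRing O] [IsDomain O] [IsDiscreteValuationRing O]
    (π : O) (hπ : Irreducible π) (α β : O) (hα : π ∣ α) (hβ : π ∣ β) (hαβ : α ≠ β)
    (k : ℕ) (hk : (π ^ k : O) ∣ β - α)
    (hm : emultiplicity π α = emultiplicity π β)
    (N₁ N₂ : ℕ) (hN : N₁ < N₂)
    (hquot : Nonempty
      (((Submodule.span O ({(1, 1), (0, π ^ k)} : Set (O × O))) ⧸
          (Submodule.comap
            (Submodule.span O ({(1, 1), (0, π ^ k)} : Set (O × O))).subtype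
            (Submodule.map
              (((LinearMap.lsmul O O) α).prodMap ((LinearMap.lsmul O O) β))
              (Submodule.span O ({(1, 1), (0, π ^ k)} : Set (O × O)))))) ≃ₗ[O]
        (O ⧸ (Ideal.span {π ^ N₁} : Ideal O)) × (O ⧸ (Ideal.span {π ^ N₂} : Ideal O)))) :
    0 < k ∧
      emultiplicity π (β - α) - (k : ℕ∞) <
        min (emultiplicity π α) (emultiplicity π β) :=
  stmt14_general O π hπ α β k hk hm N₁ N₂ hN hquot
end

section
/- Let M(k) = ⟨(1,1),(0,π^k)⟩_O ⊂ O⊕O with S·(a,b) = (αa, βb), where α ≠ β ∈ πO and 0 ≤ k ≤ ord(β−α). Then M(k) is isomorphic as a Λ_E-module to N_{ord(β−α)−k} = ⟨S + c_1/2, π^{ord(β−α)−k}⟩_O ⊂ Λ_E/((S−α)(S−β)), where c_1 = −(α+β) and p is odd. -/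
/-!
Identify `Λ_E/(f)` with `O × O` via `aS + b ↦ (a, b)`. The isomorphism sends the generators
`(1, 1)` and `(0, π^k)` of `M(k)` to `c` and `S − α`: it is `c` times the inverse of evaluation
`g ↦ (g(α), g(β))` (as `(S − α)(β) = β − α = c π^k`), which is why it turns `S·(a, b) = (αa, βb)`
into multiplication by `S`. These images generate `N_x`, because `c` is associate to `π^x` and
`(S − α) − (S + c₁/2) = (β − α)/2 ∈ π^x O`. Both pairs of generators are bases, so matching them
gives an isomorphism.
-/

open Submodule

section SpanPair

variable {R M : Type*} [CommRing R] [AddCommGroup M] [Module R M]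

noncomputable def spanPairEquiv {m₁ m₂ n₁ n₂ : M} (hm : LinearIndependent R ![m₁, m₂])
    (hn : LinearIndependent R ![n₁, n₂]) : span R {m₁, m₂} ≃ₗ[R] span R {n₁, n₂} :=
  (LinearEquiv.ofEq (span R (Set.range ![m₁, m₂])) _ (by rw [Matrix.range_cons_cons_empty])).symm
    ≪≫ₗ (Module.Basis.span hm).equiv (Module.Basis.span hn) (Equiv.refl _)
    ≪≫ₗ LinearEquiv.ofEq (span R (Set.range ![n₁, n₂])) _ (by rw [Matrix.range_cons_cons_empty])

theorem spanPairEquiv_apply {m₁ m₂ n₁ n₂ : M} (hm : LinearIndependent R ![m₁, m₂])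
    (hn : LinearIndependent R ![n₁, n₂]) {y : M} (hy : y ∈ span R {m₁, m₂}) {a b : R}
    (hab : y = a • m₁ + b • m₂) : (spanPairEquiv hm hn ⟨y, hy⟩ : M) = a • n₁ + b • n₂ := by
  subst hab
  have hmem (i : Fin 2) : ![m₁, m₂] i ∈ span R {m₁, m₂} := by
    rw [← Matrix.range_cons_cons_empty m₁ m₂ ![]]
    exact subset_span (Set.mem_range_self i)
  have hbasis (i : Fin 2) : (spanPairEquiv hm hn ⟨![m₁, m₂] i, hmem i⟩ : M) = ![n₁, n₂] i := by
    have h := (Module.Basis.span hm).equiv_apply i (Module.Basis.span hn) (Equiv.refl _)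
    rw [Module.Basis.span_apply, Module.Basis.span_apply] at h
    exact congrArg Subtype.val h
  have hsplit : (⟨a • m₁ + b • m₂, hy⟩ : span R {m₁, m₂}) =
      a • ⟨![m₁, m₂] 0, hmem 0⟩ + b • ⟨![m₁, m₂] 1, hmem 1⟩ := rfl
  rw [hsplit, map_add, map_smul, map_smul, coe_add, coe_smul, coe_smul, hbasis 0, hbasis 1]
  rfl

end SpanPair

section TriangularPairs

variable {R : Type*} [CommRing R]

theorem linearIndependent_pair_one_zero [NoZeroDivisors R] (v : R) {w : R} (hw : w ≠ 0) :
    LinearIndependent R ![((1 : R), v), (0, w)] := by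
  refine LinearIndependent.pair_iff.mpr fun s t hst => ?_
  have hs : s = 0 := by simpa using congrArg Prod.fst hst
  subst hs
  exact ⟨rfl, by simpa [hw] using congrArg Prod.snd hst⟩

theorem span_pair_one_zero_eq (v t w : R) {u : R} (hu : IsUnit u) :
    span R {((1 : R), v + t * w), (0, u * w)} = span R {(1, v), (0, w)} := by
  obtain ⟨u', hu'⟩ := hu.exists_right_inv
  apply le_antisymm <;> rw [span_le, Set.insert_subset_iff, Set.singleton_subset_iff] <;>
    refine ⟨mem_span_pair.mpr ?_, mem_span_pair.mpr ?_⟩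
  · exact ⟨1, t, by ext <;> simp⟩
  · exact ⟨0, u, by ext <;> simp⟩
  · exact ⟨1, -(t * u'), by ext <;> simp; linear_combination -t * w * hu'⟩
  · exact ⟨0, u', by ext <;> simp; linear_combination w * hu'⟩

end TriangularPairs

theorem stmt18_general (O : Type*) [CommRing O] [IsDomain O]
    (h2 : IsUnit (2 : O))
    (π : O) (hπ : Irreducible π) (α β : O)
    (k : ℕ) (c : O) (hc : c * π ^ k = β - α)
    (x : ℕ) (u : O) (hu : IsUnit u) (hx : c = u * π ^ x)
    (h : O) (hh : 2 * h = -(α + β)) :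
    ∃ e : (Submodule.span O ({(1, 1), (0, π ^ k)} : Set (O × O))) ≃ₗ[O]
        (Submodule.span O ({(1, h), (0, π ^ x)} : Set (O × O))),
      ∀ (y : O × O) (hy : y ∈ Submodule.span O ({(1, 1), (0, π ^ k)} : Set (O × O)))
        (hSy : (α * y.1, β * y.2) ∈
          Submodule.span O ({(1, 1), (0, π ^ k)} : Set (O × O))),
        ((e ⟨(α * y.1, β * y.2), hSy⟩ : O × O) =
          ((e ⟨y, hy⟩ : O × O).2 + (e ⟨y, hy⟩ : O × O).1 * (α + β),
            -((e ⟨y, hy⟩ : O × O).1 * (α * β)))) := by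
  obtain ⟨w, hw⟩ := h2.exists_right_inv
  have hM := linearIndependent_pair_one_zero (1 : O) (pow_ne_zero k hπ.ne_zero)
  have hN : LinearIndependent O ![((0 : O), c), (1, -α)] := by
    rw [LinearIndependent.pair_symm_iff, hx]
    exact linearIndependent_pair_one_zero _ (mul_ne_zero hu.ne_zero (pow_ne_zero x hπ.ne_zero))
  have hspan : span O {((0 : O), c), (1, -α)} = span O {(1, h), (0, π ^ x)} := by
    rw [Set.pair_comm, ← span_pair_one_zero_eq h (w * u * π ^ k) (π ^ x) hu, hx]
    congr 4
    linear_combination -w * hh + (h + α) * hw - w * hc + w * π ^ k * hx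
  refine ⟨spanPairEquiv hM hN ≪≫ₗ LinearEquiv.ofEq _ _ hspan, fun y hy hSy => ?_⟩
  obtain ⟨a, b, hab⟩ := mem_span_pair.mp hy
  have hSab :
      (α * y.1, β * y.2) = (α * a) • ((1 : O), (1 : O)) + (a * c + β * b) • (0, π ^ k) := by
    subst hab
    ext
    · simp
    · simp only [Prod.snd_add, Prod.smul_snd, smul_eq_mul]
      linear_combination -a * hc
  simp only [LinearEquiv.trans_apply, LinearEquiv.coe_ofEq_apply,
    spanPairEquiv_apply hM hN hy hab.symm, spanPairEquiv_apply hM hN hSy hSab]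
  ext <;> simp <;> ring

/-- Remark after Koike's theorem: with `p` odd, `α ≠ β ∈ πO`,
`0 ≤ k ≤ ord(β−α)`, and `f(S) = (S−α)(S−β) = S² + c₁S + c₀` (`c₁ = −(α+β)`,
`c₀ = αβ`), the module `M(k) = ⟨(1,1),(0,π^k)⟩_O ⊂ O⊕O` with `S·(a,b) = (αa, βb)`
is isomorphic as a `Λ_E`-module to `N_{ord(β−α)−k} = ⟨S + c₁/2, π^{ord(β−α)−k}⟩_O
⊂ Λ_E/(f(S))`.  Here `Λ_E/(f(S))` is identified with `O⊕O` via `aS + b ↦ (a,b)`,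
so `S` acts by `(a,b) ↦ (b − a c₁, −a c₀) = (b + a(α+β), −a·αβ)`,
`N_x = ⟨(1, c₁/2), (0, π^x)⟩_O`, `c = (β−α)π^{−k}` satisfies `c = u·π^x` with `u`
a unit (i.e. `x = ord(β−α) − k`), and `h = c₁/2` satisfies `2h = −(α+β)`
(`p` odd makes `2` a unit). -/
theorem stmt18 (O : Type*) [CommRing O] [IsDomain O] [IsDiscreteValuationRing O]
    (p : ℕ) (hp : p.Prime) (hodd : Odd p) (h2 : IsUnit (2 : O))
    (π : O) (hπ : Irreducible π) (α β : O) (hα : π ∣ α) (hβ : π ∣ β) (hαβ : α ≠ β)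
    (k : ℕ) (c : O) (hc : c * π ^ k = β - α)
    (x : ℕ) (u : O) (hu : IsUnit u) (hx : c = u * π ^ x)
    (h : O) (hh : 2 * h = -(α + β)) :
    ∃ e : (Submodule.span O ({(1, 1), (0, π ^ k)} : Set (O × O))) ≃ₗ[O]
        (Submodule.span O ({(1, h), (0, π ^ x)} : Set (O × O))),
      ∀ (y : O × O) (hy : y ∈ Submodule.span O ({(1, 1), (0, π ^ k)} : Set (O × O)))
        (hSy : (α * y.1, β * y.2) ∈
          Submodule.span O ({(1, 1), (0, π ^ k)} : Set (O × O))),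
        ((e ⟨(α * y.1, β * y.2), hSy⟩ : O × O) =
          ((e ⟨y, hy⟩ : O × O).2 + (e ⟨y, hy⟩ : O × O).1 * (α + β),
            -((e ⟨y, hy⟩ : O × O).1 * (α * β)))) :=
  stmt18_general O h2 π hπ α β k c hc x u hu hx h hh
end
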